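/- The operator ∂ is a derivation of the |·|-twisted current bracket: for all ξ, η ∈ 𝔫[u], ∂[ξ,η] = [∂ξ, η] + [ξ, ∂η]. -/

import Mathlib

/-!
On monomials `x u^p`, `y u^q` with `x ∈ 𝔫_a`, `y ∈ 𝔫_b`, all three terms of the Leibniz rule are
multiples of `[x, y] u^(p+q-1)`, and with `A = |a|`, `B = |b|` the rule reduces to
`(p + q) (A + B) · A^p B^q / (A + B)^(p+q)
  = p A · A^(p-1) B^q / (A + B)^(p+q-1) + q B · A^p B^(q-1) / (A + B)^(p+q-1)`,
using `|a + b| = A + B`. Both sides of the rule are bilinear and these monomials span `𝔫[u]`.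
-/

/-- The structure constant `|a|^p * |b|^q / |a+b|^(p+q)` of the `|·|`-twisted
current bracket. -/
noncomputable def twistCoeff {M : Type*} [AddCommMonoid M] (absM : M →+ ℤ)
    (a b : M) (p q : ℕ) : ℚ :=
  ((absM a : ℚ) ^ p * (absM b : ℚ) ^ q) / ((absM (a + b) : ℚ) ^ (p + q))

theorem twistCoeff_leibniz {M : Type*} [AddCommMonoid M] (absM : M →+ ℤ) {a b : M}
    (ha : 0 ≤ absM a) (hb : 0 ≤ absM b) (p q : ℕ) :
    ((p + q : ℕ) * absM (a + b) : ℚ) * twistCoeff absM a b p q =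
      twistCoeff absM a b (p - 1) q * (p * absM a) +
        twistCoeff absM a b p (q - 1) * (q * absM b) := by
  unfold twistCoeff
  rw [map_add]
  push_cast
  rcases (add_nonneg ha hb).eq_or_lt with hS | hS
  · obtain ⟨ha0, hb0⟩ := (add_eq_zero_iff_of_nonneg ha hb).mp hS.symm
    simp [ha0, hb0]
  · have hS' : (absM a + absM b : ℚ) ≠ 0 := by exact_mod_cast hS.ne'
    rcases p with _ | p <;> rcases q with _ | q <;> push_cast <;> field_simp <;> ring

theorem Finsupp.single_tsub_one_add {L : Type*} [AddCommMonoid L] {p : ℕ} (q : ℕ) {x : L}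
    (hx : p = 0 → x = 0) : single (p - 1 + q) x = single (p + q - 1) x := by
  rcases p with _ | p
  · simp [hx rfl]
  · congr 1; omega

theorem Finsupp.single_add_tsub_one {L : Type*} [AddCommMonoid L] (p : ℕ) {q : ℕ} {x : L}
    (hx : q = 0 → x = 0) : single (p + (q - 1)) x = single (p + q - 1) x := by
  rw [add_comm p, add_comm p, single_tsub_one_add p hx]

theorem Finsupp.span_iUnion_image_single_eq_top {R ι M L : Type*} [Semiring R]
    [AddCommMonoid L] [Module R L] {𝒢 : M → Submodule R L} (h𝒢 : ⨆ a, 𝒢 a = ⊤) :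
    Submodule.span R (⋃ (p : ι) (a : M), Finsupp.single p '' (𝒢 a : Set L)) = ⊤ := by
  have h (p : ι) (a : M) :
      Submodule.span R (Finsupp.single p '' (𝒢 a : Set L)) = (𝒢 a).map (Finsupp.lsingle p) := by
    rw [← Submodule.span_eq (𝒢 a), Submodule.map_span, Submodule.span_eq]
    rfl
  simp_rw [Submodule.span_iUnion, h, ← Submodule.map_iSup, h𝒢, ← LinearMap.range_eq_map]
  exact Finsupp.iSup_lsingle_range

theorem leibniz_single_single {M L : Type*} [AddCommMonoid M] [LieRing L] [LieAlgebra ℚ L]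
    {𝒢 : M → Submodule ℚ L} {absM : M →+ ℤ} {B : (ℕ →₀ L) →ₗ[ℚ] (ℕ →₀ L) →ₗ[ℚ] (ℕ →₀ L)}
    {D : (ℕ →₀ L) →ₗ[ℚ] (ℕ →₀ L)}
    (hbracket : ∀ (a b : M) (x y : L), x ∈ 𝒢 a → y ∈ 𝒢 b → ⁅x, y⁆ ∈ 𝒢 (a + b))
    (hB : ∀ (a b : M) (x y : L), x ∈ 𝒢 a → y ∈ 𝒢 b → ∀ p q : ℕ,
      B (.single p x) (.single q y) = .single (p + q) (twistCoeff absM a b p q • ⁅x, y⁆))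
    (hD : ∀ (a : M) (x : L), x ∈ 𝒢 a → ∀ p : ℕ,
      D (.single p x) = .single (p - 1) (((p : ℚ) * (absM a : ℚ)) • x))
    {a b : M} (ha : 0 ≤ absM a) (hb : 0 ≤ absM b) {x y : L} (hx : x ∈ 𝒢 a) (hy : y ∈ 𝒢 b)
    (p q : ℕ) :
    D (B (.single p x) (.single q y)) =
      B (D (.single p x)) (.single q y) + B (.single p x) (D (.single q y)) := by
  rw [hB a b x y hx hy, hD _ _ (Submodule.smul_mem _ _ (hbracket a b x y hx hy)),
    hD a x hx, hD b y hy, hB a b _ y (Submodule.smul_mem _ _ hx) hy,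
    hB a b x _ hx (Submodule.smul_mem _ _ hy), smul_lie, lie_smul, smul_smul, smul_smul,
    smul_smul, Finsupp.single_tsub_one_add q (by rintro rfl; simp),
    Finsupp.single_add_tsub_one p (by rintro rfl; simp), ← Finsupp.single_add, ← add_smul,
    twistCoeff_leibniz absM ha hb]

theorem partial_is_derivation_of_twisted_current_bracket_general
    {M : Type*} [AddCommMonoid M] [DecidableEq M]
    {L : Type*} [LieRing L] [LieAlgebra ℚ L]
    (𝒢 : M → Submodule ℚ L)
    (hInternal : DirectSum.IsInternal 𝒢)
    (hbracket : ∀ (a b : M) (x y : L), x ∈ 𝒢 a → y ∈ 𝒢 b → ⁅x, y⁆ ∈ 𝒢 (a + b))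
    (absM : M →+ ℤ)
    (habs : ∀ a : M, a ≠ 0 → 0 < absM a)
    (B : (ℕ →₀ L) →ₗ[ℚ] (ℕ →₀ L) →ₗ[ℚ] (ℕ →₀ L))
    (hB : ∀ (a b : M) (x y : L), x ∈ 𝒢 a → y ∈ 𝒢 b → ∀ p q : ℕ,
      B (Finsupp.single p x) (Finsupp.single q y)
        = Finsupp.single (p + q) (twistCoeff absM a b p q • ⁅x, y⁆))
    (D : (ℕ →₀ L) →ₗ[ℚ] (ℕ →₀ L))
    (hD : ∀ (a : M) (x : L), x ∈ 𝒢 a → ∀ p : ℕ,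
      D (Finsupp.single p x)
        = Finsupp.single (p - 1) (((p : ℚ) * (absM a : ℚ)) • x)) :
    ∀ ξ η : ℕ →₀ L, D (B ξ η) = B (D ξ) η + B ξ (D η) := by
  have habs_nonneg (a : M) : 0 ≤ absM a := by
    rcases eq_or_ne a 0 with rfl | ha
    · simp
    · exact (habs a ha).le
  have hspan := Finsupp.span_iUnion_image_single_eq_top (ι := ℕ) hInternal.submodule_iSup_eq_top
  suffices B.compr₂ D = B ∘ₗ D + B.compl₂ D from LinearMap.congr_fun₂ this
  refine LinearMap.ext_on hspan fun ξ hξ => LinearMap.ext_on hspan fun η hη => ?_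
  simp only [Set.mem_iUnion, Set.mem_image, SetLike.mem_coe] at hξ hη
  obtain ⟨p, a, x, hx, rfl⟩ := hξ
  obtain ⟨q, b, y, hy, rfl⟩ := hη
  exact leibniz_single_single hbracket hB hD (habs_nonneg a) (habs_nonneg b) hx hy p q

/-- The lowering operator `∂` (the `ℚ`-linear operator on
`𝔫[u] = ℕ →₀ 𝔫` sending `x u^p ↦ p |a| x u^(p-1)` for `x ∈ 𝔫_a`, in particular
`∂(x ⊗ 1) = 0`) is a derivation of the `|·|`-twisted current bracket:
`∂[ξ,η] = [∂ξ, η] + [ξ, ∂η]`. -/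
theorem partial_is_derivation_of_twisted_current_bracket
    {M : Type*} [AddCommMonoid M] [DecidableEq M]
    {L : Type*} [LieRing L] [LieAlgebra ℚ L]
    (𝒢 : M → Submodule ℚ L)
    (hInternal : DirectSum.IsInternal 𝒢)
    (hzero : 𝒢 0 = ⊥)
    (hbracket : ∀ (a b : M) (x y : L), x ∈ 𝒢 a → y ∈ 𝒢 b → ⁅x, y⁆ ∈ 𝒢 (a + b))
    (absM : M →+ ℤ)
    (habs : ∀ a : M, a ≠ 0 → 0 < absM a)
    (B : (ℕ →₀ L) →ₗ[ℚ] (ℕ →₀ L) →ₗ[ℚ] (ℕ →₀ L))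
    (hB : ∀ (a b : M) (x y : L), x ∈ 𝒢 a → y ∈ 𝒢 b → ∀ p q : ℕ,
      B (Finsupp.single p x) (Finsupp.single q y)
        = Finsupp.single (p + q) (twistCoeff absM a b p q • ⁅x, y⁆))
    (D : (ℕ →₀ L) →ₗ[ℚ] (ℕ →₀ L))
    (hD : ∀ (a : M) (x : L), x ∈ 𝒢 a → ∀ p : ℕ,
      D (Finsupp.single p x)
        = Finsupp.single (p - 1) (((p : ℚ) * (absM a : ℚ)) • x)) :
    ∀ ξ η : ℕ →₀ L, D (B ξ η) = B (D ξ) η + B ξ (D η) :=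
  partial_is_derivation_of_twisted_current_bracket_general 𝒢 hInternal hbracket absM habs B hB D hD
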